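/- arXiv:1407.1787 — 7 statements merged into one kernel-verified Lean document; each statement's English description precedes it below -/
import Mathlib

section
/- In a minimal dynamical system on a compact metric space, a point x can be proximal to a translate t·x only if t·x = x. Equivalently, if inf_{s∈G} d(s·x, s·t·x) = 0 in a minimal system with abelian acting group, then t·x = x. -/
/-!
The map `y ↦ dist y (φ t y)` is continuous, and proximality of `x` and `φ t x` says that its
infimum along the orbit of `x` is `0`; by compactness `φ t` has a fixed point. Since the group is
abelian, the fixed points of `t` form a closed invariant set, which by minimality is everything.
-/

open Function Set

theorem exists_isFixedPt_of_forall_exists_dist_lt {X : Type*} [MetricSpace X] [CompactSpace X]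
    {f : X → X} (hf : Continuous f) (h : ∀ ε > (0 : ℝ), ∃ y, dist y (f y) < ε) :
    ∃ y, IsFixedPt f y := by
  obtain ⟨y₀, -⟩ := h 1 one_pos
  obtain ⟨y, -, hy⟩ := isCompact_univ.exists_isMinOn ⟨y₀, mem_univ _⟩
    (continuous_id.dist hf).continuousOn
  refine ⟨y, (dist_le_zero.mp ?_).symm⟩
  by_contra! hpos
  obtain ⟨z, hz⟩ := h _ hpos
  exact (hy (mem_univ z)).not_gt hz

theorem fixedPoints_eq_univ_of_commute_of_denseRange {X G : Type*} [TopologicalSpace X]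
    [T2Space X] {f : X → X} (hf : Continuous f) {φ : G → X → X}
    (hcomm : ∀ s, Function.Commute f (φ s)) {y : X} (hy : IsFixedPt f y)
    (hdense : DenseRange fun s => φ s y) :
    fixedPoints f = univ := by
  have horbit : range (fun s => φ s y) ⊆ fixedPoints f := by
    rintro _ ⟨s, rfl⟩
    exact hy.map (hcomm s).symm
  rw [← (isClosed_fixedPoints hf).closure_eq]
  exact (hdense.mono horbit).closure_eq

theorem commute_of_map_add {X G : Type*} [AddCommMagma G] {φ : G → X → X}
    (hφadd : ∀ s t x, φ (s + t) x = φ s (φ t x)) (s t : G) :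
    Function.Commute (φ s) (φ t) := fun x => by
  rw [← hφadd, add_comm, hφadd]

theorem proximal_to_translate_implies_fixed_general
    {X G : Type} [MetricSpace X] [CompactSpace X]
    [AddCommGroup G] [TopologicalSpace G]
    (φ : G → X → X)
    (hφcont : Continuous fun p : G × X => φ p.1 p.2)
    (hφadd : ∀ s t x, φ (s + t) x = φ s (φ t x))
    (hmin : ∀ x : X, Dense (Set.range fun t => φ t x))
    (x : X) (t : G)
    (hprox : ∀ ε > (0:ℝ), ∃ s : G, dist (φ s x) (φ s (φ t x)) < ε) :
    φ t x = x := by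
  have hφt : Continuous (φ t) := hφcont.comp (continuous_const.prodMk continuous_id)
  have hcomm : ∀ s, Function.Commute (φ t) (φ s) := commute_of_map_add hφadd t
  obtain ⟨y, hy⟩ := exists_isFixedPt_of_forall_exists_dist_lt hφt fun ε hε => by
    obtain ⟨s, hs⟩ := hprox ε hε
    exact ⟨φ s x, by rwa [hcomm s]⟩
  have hfix := fixedPoints_eq_univ_of_commute_of_denseRange hφt hcomm hy (hmin y)
  exact eq_univ_iff_forall.mp hfix x

/-- In a minimal system with abelian acting group on a compact metric
space, a point x can be proximal to a translate t·x only if t·x = x. -/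
theorem proximal_to_translate_implies_fixed
    {X G : Type} [MetricSpace X] [CompactSpace X]
    [AddCommGroup G] [TopologicalSpace G] [IsTopologicalAddGroup G] [LocallyCompactSpace G]
    (φ : G → X → X)
    (hφcont : Continuous fun p : G × X => φ p.1 p.2)
    (hφzero : ∀ x, φ 0 x = x)
    (hφadd : ∀ s t x, φ (s + t) x = φ s (φ t x))
    (hmin : ∀ x : X, Dense (Set.range fun t => φ t x))
    (x : X) (t : G)
    (hprox : ∀ ε > (0:ℝ), ∃ s : G, dist (φ s x) (φ s (φ t x)) < ε) :
    φ t x = x :=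
  proximal_to_translate_implies_fixed_general φ hφcont hφadd hmin x t hprox
end

section
/- A uniformly discrete set L in a locally compact abelian group G has finite local complexity (for every compact K, the set {(L−x) ∩ K : x ∈ L} is finite) if and only if the difference set L − L is locally finite (has finite intersection with every compact subset of G). -/
open Pointwise Filter Topology

/-!
Every patch `(L - x) ∩ K` with `x ∈ L` is a subset of `(L - L) ∩ K`, and `(L - L) ∩ K` is
the union of these patches. So if `(L - L) ∩ K` is finite there are only finitely many
patches, and conversely finitely many patches have a finite union as soon as each patch is
finite. That last point is where uniform discreteness enters: a compact set is covered by
finitely many translates of a neighbourhood `V` of `0` with `V - V ⊆ U`, and each translate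
contains at most one point of a `U`-discrete set.
-/

theorem IsCompact.finite_inter_of_subsingleton_inter_nhds {X : Type*} [TopologicalSpace X]
    {S K : Set X} (hK : IsCompact K) (hS : ∀ x ∈ K, ∃ N ∈ 𝓝 x, (S ∩ N).Subsingleton) :
    (S ∩ K).Finite := by
  choose! N hN hSN using hS
  obtain ⟨t, htK, hKt⟩ := hK.elim_nhds_subcover N hN
  refine (t.finite_toSet.biUnion fun x hx => (hSN x (htK x hx)).finite).subset ?_
  rintro y ⟨hyS, hyK⟩
  obtain ⟨x, hx, hyN⟩ := Set.mem_iUnion₂.mp (hKt hyK)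
  exact Set.mem_iUnion₂.mpr ⟨x, hx, hyS, hyN⟩

section UniformlyDiscrete

variable {G : Type*} [AddCommGroup G] [TopologicalSpace G]

def IsUniformlyDiscrete (L : Set G) : Prop :=
  ∃ U ∈ 𝓝 (0 : G), ∀ x ∈ L, ∀ y ∈ L, x - y ∈ U → x = y

theorem IsUniformlyDiscrete.image_sub_const {L : Set G} (hL : IsUniformlyDiscrete L) (x : G) :
    IsUniformlyDiscrete ((· - x) '' L) := by
  obtain ⟨U, hU, hLU⟩ := hL
  refine ⟨U, hU, ?_⟩
  rintro _ ⟨p, hp, rfl⟩ _ ⟨q, hq, rfl⟩ hpq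
  rw [sub_sub_sub_cancel_right] at hpq
  rw [hLU p hp q hq hpq]

theorem IsUniformlyDiscrete.finite_inter [IsTopologicalAddGroup G] {L K : Set G}
    (hL : IsUniformlyDiscrete L) (hK : IsCompact K) : (L ∩ K).Finite := by
  obtain ⟨U, hU, hLU⟩ := hL
  obtain ⟨V, hV, hVU⟩ := exists_nhds_half_neg hU
  refine hK.finite_inter_of_subsingleton_inter_nhds fun k _ => ⟨(· - k) ⁻¹' V, ?_, ?_⟩
  · exact (continuous_sub_right k).continuousAt.preimage_mem_nhds (by rwa [sub_self])
  · rintro p ⟨hp, hpV⟩ q ⟨hq, hqV⟩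
    exact hLU p hp q hq (by simpa using hVU _ hpV _ hqV)

end UniformlyDiscrete

section Patches

variable {G : Type*} [AddCommGroup G]

def patches (L K : Set G) : Set (Set G) :=
  {P | ∃ x ∈ L, P = ((fun y => y - x) '' L) ∩ K}

theorem sub_inter_eq_sUnion_patches (L K : Set G) : (L - L) ∩ K = ⋃₀ patches L K := by
  ext z
  constructor
  · rintro ⟨⟨a, ha, b, hb, rfl⟩, hzK⟩
    exact ⟨_, ⟨b, hb, rfl⟩, ⟨a, ha, rfl⟩, hzK⟩
  · rintro ⟨_, ⟨x, hx, rfl⟩, ⟨a, ha, rfl⟩, hzK⟩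
    exact ⟨⟨a, ha, x, hx, rfl⟩, hzK⟩

theorem patches_subset_powerset (L K : Set G) : patches L K ⊆ 𝒫 ((L - L) ∩ K) := fun _ hP =>
  (sub_inter_eq_sUnion_patches L K).symm ▸ Set.subset_sUnion_of_mem hP

end Patches

/-- A uniformly discrete set L in a locally compact abelian group has
finite local complexity iff L − L is locally finite. -/
theorem flc_iff_difference_locally_finite
    {G : Type} [AddCommGroup G] [TopologicalSpace G] [IsTopologicalAddGroup G]
    (L : Set G)
    (hUD : ∃ U ∈ nhds (0 : G), ∀ x ∈ L, ∀ y ∈ L, x - y ∈ U → x = y) :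
    (∀ K : Set G, IsCompact K →
        {P : Set G | ∃ x ∈ L, P = ((fun y => y - x) '' L) ∩ K}.Finite) ↔
    (∀ K : Set G, IsCompact K → ((L - L) ∩ K).Finite) := by
  have hL : IsUniformlyDiscrete L := hUD
  constructor
  · intro hFLC K hK
    rw [sub_inter_eq_sUnion_patches]
    refine (hFLC K hK).sUnion ?_
    rintro _ ⟨x, -, rfl⟩
    exact (hL.image_sub_const x).finite_inter hK
  · intro hLF K hK
    exact (hLF K hK).finite_subsets.subset (patches_subset_powerset L K)
end

section
/- Let (X,G) be a minimal dynamical system and π : X → Y an equicontinuous factor such that some fiber π^{-1}(y) is a singleton. Then (Y,G) is the maximal equicontinuous factor of (X,G). -/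
/-!
Two points `x, x'` in one fibre of `π` are proximal: along the times `t` at which `φ t x`
approaches the point `x₀` forming a singleton fibre, `φ t x'` has all its cluster points in
that fibre as well, so it approaches `x₀` too. A continuous equivariant `σ` carries proximal
pairs to proximal pairs, and an equicontinuous group action has no proximal pairs besides the
diagonal. Hence `σ` is constant on the fibres of `π`, and it descends along the quotient map `π`.
-/

open Filter Topology

def Proximal {G Z : Type*} [Dist Z] (ρ : G → Z → Z) (z z' : Z) : Prop :=
  ∀ ε > 0, ∃ t, dist (ρ t z) (ρ t z') < ε

section Proximal

variable {G : Type*}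

theorem Proximal.of_tendsto {Z : Type*} [PseudoMetricSpace Z] {ρ : G → Z → Z} {z z' w : Z}
    {l : Filter G} [l.NeBot] (h : Tendsto (fun t => ρ t z) l (𝓝 w))
    (h' : Tendsto (fun t => ρ t z') l (𝓝 w)) : Proximal ρ z z' := by
  intro ε hε
  have hdist : Tendsto (fun t => dist (ρ t z) (ρ t z')) l (𝓝 0) := by
    simpa using h.dist h'
  exact (hdist.eventually (gt_mem_nhds hε)).exists

theorem Proximal.map {X Z : Type*} [PseudoMetricSpace X] [CompactSpace X] [PseudoMetricSpace Z]
    {φ : G → X → X} {ρ : G → Z → Z} {σ : X → Z} (hσc : Continuous σ)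
    (hσeq : ∀ t x, σ (φ t x) = ρ t (σ x)) {x x' : X} (h : Proximal φ x x') :
    Proximal ρ (σ x) (σ x') := by
  intro ε hε
  obtain ⟨δ, hδ, hσδ⟩ :=
    Metric.uniformContinuous_iff.1 (CompactSpace.uniformContinuous_of_continuous hσc) ε hε
  obtain ⟨t, ht⟩ := h δ hδ
  exact ⟨t, by simpa only [hσeq] using hσδ ht⟩

theorem Proximal.eq_of_equicontinuous [AddGroup G] {Z : Type*} [MetricSpace Z]
    {ρ : G → Z → Z} (hρ0 : ∀ z, ρ 0 z = z)
    (hρadd : ∀ s t z, ρ (s + t) z = ρ s (ρ t z))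
    (hρequi : ∀ ε > (0:ℝ), ∃ δ > (0:ℝ), ∀ z z' : Z, dist z z' < δ →
      ∀ t, dist (ρ t z) (ρ t z') < ε)
    {z z' : Z} (h : Proximal ρ z z') : z = z' := by
  refine eq_of_forall_dist_le fun ε hε => ?_
  obtain ⟨δ, hδ, hρδ⟩ := hρequi ε hε
  obtain ⟨t, ht⟩ := h δ hδ
  have hinv : ∀ w, ρ (-t) (ρ t w) = w := fun w => by rw [← hρadd, neg_add_cancel, hρ0]
  simpa only [hinv] using (hρδ _ _ ht (-t)).le

end Proximal

theorem tendsto_nhds_of_tendsto_comp_of_singleton_fiber {α X Y : Type*} [TopologicalSpace X]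
    [CompactSpace X] [TopologicalSpace Y] [T2Space Y] {π : X → Y} (hπc : Continuous π)
    {x₀ : X} (hx₀ : ∀ x, π x = π x₀ → x = x₀) {l : Filter α} {g : α → X}
    (hg : Tendsto (π ∘ g) l (𝓝 (π x₀))) : Tendsto g l (𝓝 x₀) := by
  refine tendsto_nhds_of_unique_mapClusterPt fun a ha => hx₀ a ?_
  have hπa : ClusterPt (π a) (𝓝 (π x₀)) :=
    (ha.continuousAt_comp hπc.continuousAt).clusterPt.mono hg
  exact eq_of_nhds_neBot hπa.neBot

theorem proximal_of_eq_of_singleton_fiber {G X Y : Type*} [PseudoMetricSpace X] [CompactSpace X]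
    [TopologicalSpace Y] [T2Space Y] {φ : G → X → X} {ψ : G → Y → Y} {π : X → Y}
    (hπc : Continuous π) (hπeq : ∀ t x, π (φ t x) = ψ t (π x)) {x₀ : X}
    (hx₀ : ∀ x, π x = π x₀ → x = x₀) {x x' : X} (hmin : DenseRange fun t => φ t x)
    (hxx' : π x = π x') : Proximal φ x x' := by
  let l : Filter G := comap (fun t => φ t x) (𝓝 x₀)
  have : l.NeBot := comap_neBot fun _ hs => hmin.mem_nhds hs
  have hx : Tendsto (fun t => φ t x) l (𝓝 x₀) := tendsto_comap
  have hx' : Tendsto (fun t => φ t x') l (𝓝 x₀) := by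
    refine tendsto_nhds_of_tendsto_comp_of_singleton_fiber hπc hx₀ ?_
    have hfib : π ∘ (fun t => φ t x') = π ∘ (fun t => φ t x) := by
      funext t; simp only [Function.comp_apply, hπeq, hxx']
    exact hfib ▸ (hπc.tendsto x₀).comp hx
  exact .of_tendsto hx hx'

theorem equicontinuous_factor_with_singleton_fiber_is_maximal_general
    {G : Type} [AddCommGroup G]
    {X Y : Type} [MetricSpace X] [CompactSpace X] [MetricSpace Y]
    (φ : G → X → X)
    (hmin : ∀ x : X, Dense (Set.range fun t => φ t x))
    (ψ : G → Y → Y)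
    (π : X → Y) (hπc : Continuous π) (hπs : Function.Surjective π)
    (hπeq : ∀ t x, π (φ t x) = ψ t (π x))
    (y₀ : Y) (hfiber : ∃! x : X, π x = y₀) :
    ∀ (Z : Type) [MetricSpace Z] [CompactSpace Z] (ρ : G → Z → Z),
      (∀ t, Continuous (ρ t)) → (∀ z, ρ 0 z = z) →
      (∀ s t z, ρ (s + t) z = ρ s (ρ t z)) →
      (∀ ε > (0:ℝ), ∃ δ > (0:ℝ), ∀ z z' : Z, dist z z' < δ →
        ∀ t, dist (ρ t z) (ρ t z') < ε) →
      ∀ σ : X → Z, Continuous σ → Function.Surjective σ →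
        (∀ t x, σ (φ t x) = ρ t (σ x)) →
        ∃ q : Y → Z, Continuous q ∧ Function.Surjective q ∧
          (∀ t y, q (ψ t y) = ρ t (q y)) ∧ ∀ x, q (π x) = σ x := by
  intro Z _ _ ρ _ hρ0 hρadd hρequi σ hσc hσs hσeq
  obtain ⟨x₀, rfl, hx₀⟩ := hfiber
  have hσfib : Function.FactorsThrough σ π := fun x x' hxx' =>
    ((proximal_of_eq_of_singleton_fiber hπc hπeq hx₀ (hmin x) hxx').map hσc hσeq
      ).eq_of_equicontinuous hρ0 hρadd hρequi
  have hπq : Topology.IsQuotientMap (⟨π, hπc⟩ : C(X, Y)) :=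
    .of_surjective_continuous hπs hπc
  let q := hπq.lift ⟨σ, hσc⟩ hσfib
  have hqπ : ∀ x, q (π x) = σ x := fun x =>
    DFunLike.congr_fun (hπq.lift_comp ⟨σ, hσc⟩ hσfib) x
  refine ⟨q, q.continuous, fun z => ?_, fun t => hπs.forall.2 fun x => ?_, hqπ⟩
  · obtain ⟨x, rfl⟩ := hσs z
    exact ⟨π x, hqπ x⟩
  · rw [← hπeq, hqπ, hqπ, hσeq]

/-- If (Y,G) is an equicontinuous factor of a minimal system (X,G)
and some fiber of the factor map is a singleton, then (Y,G) is the maximal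
equicontinuous factor: every equicontinuous factor of (X,G) factors through it. -/
theorem equicontinuous_factor_with_singleton_fiber_is_maximal
    {G : Type} [AddCommGroup G]
    {X Y : Type} [MetricSpace X] [CompactSpace X] [MetricSpace Y] [CompactSpace Y]
    (φ : G → X → X)
    (hφc : ∀ t, Continuous (φ t)) (hφ0 : ∀ x, φ 0 x = x)
    (hφadd : ∀ s t x, φ (s + t) x = φ s (φ t x))
    (hmin : ∀ x : X, Dense (Set.range fun t => φ t x))
    (ψ : G → Y → Y)
    (hψc : ∀ t, Continuous (ψ t)) (hψ0 : ∀ y, ψ 0 y = y)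
    (hψadd : ∀ s t y, ψ (s + t) y = ψ s (ψ t y))
    (hψequi : ∀ ε > (0:ℝ), ∃ δ > (0:ℝ), ∀ y y' : Y, dist y y' < δ →
        ∀ t, dist (ψ t y) (ψ t y') < ε)
    (π : X → Y) (hπc : Continuous π) (hπs : Function.Surjective π)
    (hπeq : ∀ t x, π (φ t x) = ψ t (π x))
    (y₀ : Y) (hfiber : ∃! x : X, π x = y₀) :
    ∀ (Z : Type) [MetricSpace Z] [CompactSpace Z] (ρ : G → Z → Z),
      (∀ t, Continuous (ρ t)) → (∀ z, ρ 0 z = z) →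
      (∀ s t z, ρ (s + t) z = ρ s (ρ t z)) →
      (∀ ε > (0:ℝ), ∃ δ > (0:ℝ), ∀ z z' : Z, dist z z' < δ →
        ∀ t, dist (ρ t z) (ρ t z') < ε) →
      ∀ σ : X → Z, Continuous σ → Function.Surjective σ →
        (∀ t x, σ (φ t x) = ρ t (σ x)) →
        ∃ q : Y → Z, Continuous q ∧ Function.Surjective q ∧
          (∀ t y, q (ψ t y) = ρ t (q y)) ∧ ∀ x, q (π x) = σ x :=
  equicontinuous_factor_with_singleton_fiber_is_maximal_general φ hmin ψ π hπc hπs hπeq y₀ hfiber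
end

section
/- For a minimal dynamical system with free ℝ^N-action and finite coincidence rank, the induced ℝ^N-action on the maximal equicontinuous factor is free. -/
/-- For a minimal dynamical system with free ℝ^N-action and finite
coincidence rank, the induced ℝ^N-action on the maximal equicontinuous factor is
free. -/
theorem action_on_max_factor_free_of_finite_coincidence_rank
    {N : ℕ} {X Y : Type} [MetricSpace X] [CompactSpace X]
    [MetricSpace Y] [CompactSpace Y]
    (φ : (Fin N → ℝ) → X → X)
    (hφc : ∀ t, Continuous (φ t)) (hφ0 : ∀ x, φ 0 x = x)
    (hφadd : ∀ s t x, φ (s + t) x = φ s (φ t x))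
    (hmin : ∀ x : X, Dense (Set.range fun t => φ t x))
    (hfree : ∀ t x, φ t x = x → t = 0)
    -- (Y, ψ) is the maximal equicontinuous factor via π:
    (ψ : (Fin N → ℝ) → Y → Y)
    (hψc : ∀ t, Continuous (ψ t)) (hψ0 : ∀ y, ψ 0 y = y)
    (hψadd : ∀ s t y, ψ (s + t) y = ψ s (ψ t y))
    (hψequi : ∀ ε > (0:ℝ), ∃ δ > (0:ℝ), ∀ y y' : Y, dist y y' < δ →
        ∀ t, dist (ψ t y) (ψ t y') < ε)
    (π : X → Y) (hπc : Continuous π) (hπs : Function.Surjective π)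
    (hπeq : ∀ t x, π (φ t x) = ψ t (π x))
    (hmax : ∀ (Z : Type) [MetricSpace Z] [CompactSpace Z] (ρ : (Fin N → ℝ) → Z → Z),
      (∀ t, Continuous (ρ t)) → (∀ z, ρ 0 z = z) →
      (∀ s t z, ρ (s + t) z = ρ s (ρ t z)) →
      (∀ ε > (0:ℝ), ∃ δ > (0:ℝ), ∀ z z' : Z, dist z z' < δ →
        ∀ t, dist (ρ t z) (ρ t z') < ε) →
      ∀ σ : X → Z, Continuous σ → Function.Surjective σ →
        (∀ t x, σ (φ t x) = ρ t (σ x)) →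
        ∃ q : Y → Z, Continuous q ∧ Function.Surjective q ∧
          (∀ t y, q (ψ t y) = ρ t (q y)) ∧ ∀ x, q (π x) = σ x)
    -- finite coincidence rank: a uniform bound on the number of pairwise
    -- non-proximal points within any fiber of π:
    (hcr : ∃ n : ℕ, ∀ S : Finset X,
      (∀ x ∈ S, ∀ x' ∈ S, π x = π x') →
      (∀ x ∈ S, ∀ x' ∈ S, x ≠ x' →
        ¬ (∀ ε > (0:ℝ), ∃ t, dist (φ t x) (φ t x') < ε)) →
      S.card ≤ n) :
    ∀ t y, ψ t y = y → t = 0 := by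
  classical
  intro t y hty
  by_contra ht0
  obtain ⟨n, hn⟩ := hcr
  obtain ⟨x, hx⟩ := hπs y
  -- ψ ((k:ℝ) • t) y = y for all naturals k
  have hψk : ∀ k : ℕ, ψ ((k : ℝ) • t) y = y := by
    intro k
    induction k with
    | zero => simpa using hψ0 y
    | succ k ih =>
      have h1 : ((k + 1 : ℕ) : ℝ) • t = t + (k : ℝ) • t := by
        push_cast
        rw [add_smul, one_smul, add_comm]
      rw [h1, hψadd, ih, hty]
  -- key: for s ≠ 0, no point is proximal to its translate by s
  have key : ∀ s : Fin N → ℝ, s ≠ 0 → ∀ x1 : X,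
      ¬ (∀ ε > (0:ℝ), ∃ u, dist (φ u x1) (φ u (φ s x1)) < ε) := by
    intro s hs x1 hprox
    have hcont : Continuous fun z : X => dist z (φ s z) :=
      Continuous.dist continuous_id (hφc s)
    obtain ⟨z, -, hz⟩ := isCompact_univ.exists_isMinOn ⟨x1, trivial⟩
      hcont.continuousOn
    have hz0 : dist z (φ s z) ≤ 0 := by
      by_contra h
      push_neg at h
      obtain ⟨u, hu⟩ := hprox _ h
      have hcomm : φ s (φ u x1) = φ u (φ s x1) := by
        rw [← hφadd, ← hφadd, add_comm]
      have hle : dist z (φ s z) ≤ dist (φ u x1) (φ s (φ u x1)) :=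
        isMinOn_iff.mp hz (φ u x1) (Set.mem_univ _)
      rw [hcomm] at hle
      linarith
    have hfz : φ s z = z := (dist_le_zero.mp hz0).symm
    exact hs (hfree s z hfz)
  -- the finite set of translates
  set f : ℕ → X := fun k => φ ((k : ℝ) • t) x with hf
  have hinj : Set.InjOn f (Finset.range (n + 1) : Finset ℕ) := by
    intro j _ k _ hjk
    have h1 : φ (((j : ℝ) - (k : ℝ)) • t) (f k) = f k := by
      rw [hf]
      simp only
      rw [← hφadd, sub_smul]
      rw [sub_add_cancel]
      exact hjk
    have h2 := hfree _ _ h1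
    rcases smul_eq_zero.mp h2 with h | h
    · have : (j : ℝ) = (k : ℝ) := by linarith [sub_eq_zero.mp h]
      exact_mod_cast this
    · exact absurd h ht0
  set S : Finset X := (Finset.range (n + 1)).image f with hS
  have hfib : ∀ a ∈ S, π a = y := by
    intro a ha
    obtain ⟨k, -, rfl⟩ := Finset.mem_image.mp ha
    rw [hf]
    simp only
    rw [hπeq, hx, hψk]
  have hnonprox : ∀ a ∈ S, ∀ b ∈ S, a ≠ b →
      ¬ (∀ ε > (0:ℝ), ∃ u, dist (φ u a) (φ u b) < ε) := by
    intro a ha b hb hab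
    obtain ⟨j, -, rfl⟩ := Finset.mem_image.mp ha
    obtain ⟨k, -, rfl⟩ := Finset.mem_image.mp hb
    have hjk : (j : ℝ) ≠ (k : ℝ) := by
      intro h
      apply hab
      rw [hf]
      simp only
      rw [h]
    have hs0 : ((k : ℝ) - (j : ℝ)) • t ≠ 0 := by
      intro h
      rcases smul_eq_zero.mp h with h | h
      · have h2 := sub_eq_zero.mp h
        exact hjk h2.symm
      · exact ht0 h
    have hbs : f k = φ (((k : ℝ) - (j : ℝ)) • t) (f j) := by
      rw [hf]
      simp only
      rw [← hφadd, sub_smul, sub_add_cancel]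
    rw [hbs]
    exact key _ hs0 (f j)
  have hcard : S.card = n + 1 := by
    rw [hS, Finset.card_image_of_injOn hinj, Finset.card_range]
  have hle := hn S (fun a ha b hb => by rw [hfib a ha, hfib b hb]) hnonprox
  omega
end

section
/- If two Delone sets 𝓛₁, 𝓛₂ in ℝ^N are statistically coincident (the upper density of their symmetric difference is zero along a fixed van Hove sequence), then they are strongly proximal: for every R > 0 there exists t ∈ ℝ^N with (𝓛₁ − t) ∩ B_R(0) = (𝓛₂ − t) ∩ B_R(0). -/
open Pointwise MeasureTheory Filter

section helpers
open Metric ENNReal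

/-- Packing: balls of radius `ρ` around `r`-separated points are disjoint, so the count
times the ball volume bounds the volume of any superset. -/
lemma pack_lemma {N : ℕ} {r : ℝ} (hr : 0 < r) (T : Finset (Fin N → ℝ))
    (hsep : ∀ x ∈ T, ∀ y ∈ T, dist x y < r → x = y)
    {E : Set (Fin N → ℝ)} (hsub : ∀ x ∈ T, ball x (r/2) ⊆ E) :
    (T.card : ℝ≥0∞) * volume (ball (0:Fin N → ℝ) (r/2)) ≤ volume E := by
  have hdisj : (T : Set (Fin N → ℝ)).PairwiseDisjoint (fun x => ball x (r/2)) := by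
    intro x hx y hy hxy
    refine ball_disjoint_ball ?_
    have : ¬ dist x y < r := fun h => hxy (hsep x hx y hy h)
    linarith [not_lt.1 this]
  calc (T.card : ℝ≥0∞) * volume (ball (0:Fin N → ℝ) (r/2))
      = ∑ x ∈ T, volume (ball x (r/2)) := by
        rw [Finset.sum_congr rfl (fun x _ => Measure.addHaar_ball_center volume x (r/2)),
          Finset.sum_const, nsmul_eq_mul]
    _ = volume (⋃ x ∈ T, ball x (r/2)) :=
        (measure_biUnion_finset hdisj (fun x _ => measurableSet_ball)).symm
    _ ≤ volume E := measure_mono (Set.iUnion₂_subset hsub)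

/-- A uniformly discrete set meets any bounded set in a finite set. -/
lemma ud_finite {N : ℕ} {r : ℝ} (hr : 0 < r) {L : Set (Fin N → ℝ)}
    (hL : ∀ x ∈ L, ∀ y ∈ L, dist x y < r → x = y)
    {A : Set (Fin N → ℝ)} (hA : Bornology.IsBounded A) : (L ∩ A).Finite := by
  by_contra hinf
  replace hinf : (L ∩ A).Infinite := hinf
  obtain ⟨M, hM⟩ := hA.subset_closedBall 0
  set v := volume (ball (0:Fin N → ℝ) (r/2)) with hv
  set V := volume (closedBall (0:Fin N → ℝ) (M + r))
  have hv0 : v ≠ 0 := (measure_ball_pos _ _ (by linarith)).ne'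
  have hVt : V ≠ ⊤ := measure_closedBall_lt_top.ne
  have key : ∀ n : ℕ, (n : ℝ≥0∞) * v ≤ V := by
    intro n
    obtain ⟨T, hTsub, hTcard⟩ := hinf.exists_subset_card_eq n
    have := pack_lemma hr T
      (fun x hx y hy h => hL x (hTsub hx).1 y (hTsub hy).1 h)
      (E := closedBall (0:Fin N → ℝ) (M + r)) (fun x hx z hz => by
        have hx' : dist x (0:Fin N → ℝ) ≤ M := hM (hTsub hx).2
        have : dist z x < r/2 := mem_ball.mp hz
        have : dist z (0:Fin N → ℝ) ≤ M + r := by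
          calc dist z 0 ≤ dist z x + dist x 0 := dist_triangle _ _ _
            _ ≤ M + r := by linarith
        exact mem_closedBall.mpr this)
    rwa [hTcard] at this
  have hle : ∀ n : ℕ, (n : ℝ) ≤ (V / v).toReal := by
    intro n
    have h1 : (n : ℝ≥0∞) ≤ V / v := ENNReal.le_div_iff_mul_le (Or.inl hv0) (Or.inr hVt) |>.mpr (key n)
    have h2 : V / v ≠ ⊤ := (ENNReal.div_lt_top hVt hv0).ne
    simpa using ENNReal.toReal_mono h2 h1
  obtain ⟨n, hn⟩ := exists_nat_gt ((V / v).toReal)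
  exact absurd (hle n) (not_le.mpr hn)


/-- Covering: if `A` is covered by closed `R`-balls around a finite set, its volume is at
most the count times the ball volume. -/
lemma cover_lemma {N : ℕ} {R : ℝ} (T : Finset (Fin N → ℝ)) {A : Set (Fin N → ℝ)}
    (hcov : A ⊆ ⋃ x ∈ T, closedBall x R) :
    volume A ≤ (T.card : ℝ≥0∞) * volume (closedBall (0:Fin N → ℝ) R) := by
  calc volume A ≤ volume (⋃ x ∈ T, closedBall x R) := measure_mono hcov
    _ ≤ ∑ x ∈ T, volume (closedBall x R) := measure_biUnion_finset_le _ _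
    _ = (T.card : ℝ≥0∞) * volume (closedBall (0:Fin N → ℝ) R) := by
        rw [Finset.sum_congr rfl (fun x _ => Measure.addHaar_closedBall_center volume x R),
          Finset.sum_const, nsmul_eq_mul]

end helpers

section main
open Metric ENNReal

/-- If two Delone sets in ℝ^N are statistically coincident (the upper
density of their symmetric difference along a van Hove sequence vanishes), then
they are strongly proximal: for every R > 0 some translate makes their R-patches
at the origin coincide. -/
theorem statistically_coincident_implies_strongly_proximal
    {N : ℕ} (𝓛₁ 𝓛₂ : Set (Fin N → ℝ))
    (h₁UD : ∃ r > (0:ℝ), ∀ x ∈ 𝓛₁, ∀ y ∈ 𝓛₁, dist x y < r → x = y)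
    (h₁RD : ∃ R > (0:ℝ), ∀ v : Fin N → ℝ, ∃ x ∈ 𝓛₁, dist v x ≤ R)
    (h₂UD : ∃ r > (0:ℝ), ∀ x ∈ 𝓛₂, ∀ y ∈ 𝓛₂, dist x y < r → x = y)
    (h₂RD : ∃ R > (0:ℝ), ∀ v : Fin N → ℝ, ∃ x ∈ 𝓛₂, dist v x ≤ R)
    -- a van Hove sequence (Λ n):
    (Λ : ℕ → Set (Fin N → ℝ))
    (hΛc : ∀ n, IsCompact (Λ n))
    (hΛi : ∀ n, (interior (Λ n)).Nonempty)
    (hΛex : ∀ K : Set (Fin N → ℝ), IsCompact K → ∀ᶠ n in atTop, K ⊆ Λ n)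
    (hvH : ∀ K : Set (Fin N → ℝ), IsCompact K →
      Tendsto (fun n =>
          (volume (closure ((Λ n + K) \ Λ n) ∪ ((closure ((Λ n)ᶜ) - K) ∩ Λ n))).toReal
            / (volume (Λ n)).toReal)
        atTop (nhds 0))
    -- statistical coincidence: vanishing upper density of the symmetric difference
    (hSC : limsup
        (fun n => ((symmDiff 𝓛₁ 𝓛₂ ∩ Λ n).ncard : ℝ) / (volume (Λ n)).toReal)
        atTop = 0) :
    ∀ R > (0:ℝ), ∃ t : Fin N → ℝ,
      ((fun x => x - t) '' 𝓛₁) ∩ Metric.closedBall 0 R =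
        ((fun x => x - t) '' 𝓛₂) ∩ Metric.closedBall 0 R := by
  intro R hR
  by_contra hcon
  push_neg at hcon
  -- separation constant
  obtain ⟨r₁, hr₁, hUD₁⟩ := h₁UD
  obtain ⟨r₂, hr₂, hUD₂⟩ := h₂UD
  set r : ℝ := min r₁ r₂ with hrdef
  have hr : 0 < r := lt_min hr₁ hr₂
  have hUD₁' : ∀ x ∈ 𝓛₁, ∀ y ∈ 𝓛₁, dist x y < r → x = y :=
    fun x hx y hy h => hUD₁ x hx y hy (h.trans_le (min_le_left _ _))
  have hUD₂' : ∀ x ∈ 𝓛₂, ∀ y ∈ 𝓛₂, dist x y < r → x = y :=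
    fun x hx y hy h => hUD₂ x hx y hy (h.trans_le (min_le_right _ _))
  set S : Set (Fin N → ℝ) := symmDiff 𝓛₁ 𝓛₂ with hSdef
  -- the symmetric difference is R-relatively dense
  have hdense : ∀ t : Fin N → ℝ, ∃ x ∈ S, dist t x ≤ R := by
    intro t
    by_contra h
    push_neg at h
    apply hcon t
    have hball : 𝓛₁ ∩ closedBall t R = 𝓛₂ ∩ closedBall t R := by
      ext z
      simp only [Set.mem_inter_iff, mem_closedBall, and_congr_left_iff]
      intro hz
      have hzS : z ∉ S := by
        intro hzS
        exact absurd (dist_comm t z ▸ hz) (not_le.mpr (h z hzS))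
      rw [hSdef, Set.mem_symmDiff] at hzS
      push_neg at hzS
      exact ⟨hzS.1, hzS.2⟩
    ext z
    simp only [Set.mem_inter_iff, Set.mem_image, mem_closedBall]
    constructor
    · rintro ⟨⟨y, hy, rfl⟩, hz⟩
      have hyB : y ∈ 𝓛₁ ∩ closedBall t R := by
        refine ⟨hy, mem_closedBall.mpr ?_⟩
        have : dist (y - t) 0 = dist y t := by
          rw [dist_eq_norm, dist_eq_norm, sub_zero]
        rw [dist_eq_norm] at hz ⊢
        rw [sub_zero] at hz
        exact hz
      rw [hball] at hyB
      exact ⟨⟨y, hyB.1, rfl⟩, hz⟩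
    · rintro ⟨⟨y, hy, rfl⟩, hz⟩
      have hyB : y ∈ 𝓛₂ ∩ closedBall t R := by
        refine ⟨hy, mem_closedBall.mpr ?_⟩
        rw [dist_eq_norm] at hz ⊢
        rw [sub_zero] at hz
        exact hz
      rw [← hball] at hyB
      exact ⟨⟨y, hyB.1, rfl⟩, hz⟩
  -- sets and constants
  set K₀ : Set (Fin N → ℝ) := closedBall 0 R with hK₀def
  set K : Set (Fin N → ℝ) := closedBall 0 (R + r) with hKdef
  have hKc : IsCompact K := isCompact_closedBall _ _
  set E : ℕ → Set (Fin N → ℝ) :=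
    fun n => closure ((Λ n + K) \ Λ n) ∪ ((closure ((Λ n)ᶜ) - K) ∩ Λ n) with hEdef
  set v' : ℝ := (volume (ball (0:Fin N → ℝ) (r/2))).toReal with hv'def
  set vR' : ℝ := (volume (closedBall (0:Fin N → ℝ) R)).toReal with hvR'def
  have hv'pos : 0 < v' := ENNReal.toReal_pos (measure_ball_pos _ _ (by linarith)).ne'
    measure_ball_lt_top.ne
  have hvR'pos : 0 < vR' := ENNReal.toReal_pos (measure_closedBall_pos _ _ hR).ne'
    measure_closedBall_lt_top.ne
  have hSsub : S ⊆ 𝓛₁ ∪ 𝓛₂ := symmDiff_le_sup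
  -- per-n objects
  have hΛb : ∀ n, Bornology.IsBounded (Λ n) := fun n => (hΛc n).isBounded
  have hΛK₀c : ∀ n, IsCompact (Λ n + K₀) := fun n => (hΛc n).add (isCompact_closedBall _ _)
  have hΛKc : ∀ n, IsCompact (Λ n + K) := fun n => (hΛc n).add hKc
  have hVnt : ∀ n, volume (Λ n) ≠ ⊤ := fun n => (hΛc n).measure_lt_top.ne
  have hVnpos : ∀ n, 0 < (volume (Λ n)).toReal := fun n =>
    ENNReal.toReal_pos (Measure.measure_pos_of_nonempty_interior _ (hΛi n)).ne' (hVnt n)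
  have hEnt : ∀ n, volume (E n) ≠ ⊤ := by
    intro n
    have hsub : E n ⊆ (Λ n + K) ∪ Λ n := by
      apply Set.union_subset
      · exact (closure_mono Set.diff_subset).trans
          (by rw [(hΛKc n).isClosed.closure_eq]; exact Set.subset_union_left)
      · exact Set.inter_subset_right.trans Set.subset_union_right
    exact ((measure_mono hsub).trans_lt ((hΛKc n).union (hΛc n)).measure_lt_top).ne
  have henn : ∀ n, 0 ≤ (volume (E n)).toReal := fun n => ENNReal.toReal_nonneg
  -- finiteness of all relevant intersections
  have hfin1 : ∀ (B : Set (Fin N → ℝ)), Bornology.IsBounded B → (𝓛₁ ∩ B).Finite :=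
    fun B hB => ud_finite hr hUD₁' hB
  have hfin2 : ∀ (B : Set (Fin N → ℝ)), Bornology.IsBounded B → (𝓛₂ ∩ B).Finite :=
    fun B hB => ud_finite hr hUD₂' hB
  have hfinS : ∀ (B : Set (Fin N → ℝ)), Bornology.IsBounded B → (S ∩ B).Finite := by
    intro B hB
    refine ((hfin1 B hB).union (hfin2 B hB)).subset ?_
    rintro x ⟨hxS, hxB⟩
    rcases hSsub hxS with h | h
    · exact Or.inl ⟨h, hxB⟩
    · exact Or.inr ⟨h, hxB⟩
  -- (1) covering inequality: volume (Λ n) ≤ #(S ∩ (Λ n + K₀)) * vR'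
  have key1 : ∀ n, (volume (Λ n)).toReal ≤ ((S ∩ (Λ n + K₀)).ncard : ℝ) * vR' := by
    intro n
    have hfin : (S ∩ (Λ n + K₀)).Finite := hfinS _ (hΛK₀c n).isBounded
    have hcov : Λ n ⊆ ⋃ x ∈ hfin.toFinset, closedBall x R := by
      intro t ht
      obtain ⟨x, hxS, hxd⟩ := hdense t
      have hxmem : x ∈ Λ n + K₀ := by
        refine Set.mem_add.mpr ⟨t, ht, x - t, ?_, by abel⟩
        rw [hK₀def, mem_closedBall, dist_eq_norm, sub_zero, ← dist_eq_norm]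
        rwa [dist_comm]
      exact Set.mem_biUnion (hfin.mem_toFinset.mpr ⟨hxS, hxmem⟩)
        (mem_closedBall.mpr (dist_comm t x ▸ hxd))
    have := cover_lemma hfin.toFinset hcov
    have hcard : hfin.toFinset.card = (S ∩ (Λ n + K₀)).ncard :=
      (Set.ncard_eq_toFinset_card _ hfin).symm
    calc (volume (Λ n)).toReal
        ≤ ((hfin.toFinset.card : ℝ≥0∞) * volume (closedBall (0:Fin N → ℝ) R)).toReal :=
          ENNReal.toReal_mono (by
            exact ENNReal.mul_ne_top (ENNReal.natCast_ne_top _) measure_closedBall_lt_top.ne) this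
      _ = ((S ∩ (Λ n + K₀)).ncard : ℝ) * vR' := by
          rw [ENNReal.toReal_mul, hcard]; simp [hvR'def]
  -- packing for boundary terms
  have key2 : ∀ (L : Set (Fin N → ℝ)), (∀ x ∈ L, ∀ y ∈ L, dist x y < r → x = y) → ∀ n,
      ((L ∩ ((Λ n + K₀) \ Λ n)).ncard : ℝ) * v' ≤ (volume (E n)).toReal := by
    intro L hL n
    have hDb : Bornology.IsBounded ((Λ n + K₀) \ Λ n) :=
      (hΛK₀c n).isBounded.subset Set.diff_subset
    have hfin : (L ∩ ((Λ n + K₀) \ Λ n)).Finite := ud_finite hr hL hDb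
    have hpack := pack_lemma hr hfin.toFinset
      (fun x hx y hy h => hL x ((hfin.mem_toFinset.mp hx)).1 y ((hfin.mem_toFinset.mp hy)).1 h)
      (E := E n) ?_
    · have hcard : hfin.toFinset.card = (L ∩ ((Λ n + K₀) \ Λ n)).ncard :=
        (Set.ncard_eq_toFinset_card _ hfin).symm
      calc ((L ∩ ((Λ n + K₀) \ Λ n)).ncard : ℝ) * v'
          = ((hfin.toFinset.card : ℝ≥0∞) * volume (ball (0:Fin N → ℝ) (r/2))).toReal := by
            rw [ENNReal.toReal_mul, hcard]; simp [hv'def]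
        _ ≤ (volume (E n)).toReal := ENNReal.toReal_mono (hEnt n) hpack
    · -- each small ball around a boundary point lies in the van Hove region
      intro x hx y hy
      obtain ⟨hxΛK₀, hxΛ⟩ := (hfin.mem_toFinset.mp hx).2
      have hdxy : dist y x < r/2 := mem_ball.mp hy
      by_cases hyΛ : y ∈ Λ n
      · -- y ∈ Λ n : use the inner boundary part
        refine Or.inr ⟨?_, hyΛ⟩
        refine Set.mem_sub.mpr ⟨x, subset_closure hxΛ, x - y, ?_, by abel⟩
        rw [hKdef, mem_closedBall, dist_eq_norm, sub_zero, ← dist_eq_norm]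
        have : dist x y < r/2 := by rwa [dist_comm] at hdxy
        linarith
      · -- y ∉ Λ n : use the outer boundary part
        refine Or.inl (subset_closure ⟨?_, hyΛ⟩)
        obtain ⟨a, ha, k, hk, hak⟩ := Set.mem_add.mp hxΛK₀
        refine Set.mem_add.mpr ⟨a, ha, k + (y - x), ?_, by rw [← hak]; abel⟩
        rw [hKdef, mem_closedBall, dist_eq_norm, sub_zero]
        have h1 : ‖k‖ ≤ R := by
          have := mem_closedBall.mp hk
          rwa [dist_eq_norm, sub_zero] at this
        have h2 : ‖y - x‖ < r/2 := by rwa [dist_eq_norm] at hdxy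
        calc ‖k + (y - x)‖ ≤ ‖k‖ + ‖y - x‖ := norm_add_le _ _
          _ ≤ R + r := by linarith
  -- packing for interior counts
  have key3 : ∀ (L : Set (Fin N → ℝ)), (∀ x ∈ L, ∀ y ∈ L, dist x y < r → x = y) → ∀ n,
      ((L ∩ Λ n).ncard : ℝ) * v' ≤ (volume (Λ n)).toReal + (volume (E n)).toReal := by
    intro L hL n
    have hfin : (L ∩ Λ n).Finite := ud_finite hr hL (hΛb n)
    have hpack := pack_lemma hr hfin.toFinset
      (fun x hx y hy h => hL x ((hfin.mem_toFinset.mp hx)).1 y ((hfin.mem_toFinset.mp hy)).1 h)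
      (E := Λ n ∪ E n) ?_
    · have hcard : hfin.toFinset.card = (L ∩ Λ n).ncard :=
        (Set.ncard_eq_toFinset_card _ hfin).symm
      have hle : volume (Λ n ∪ E n) ≤ volume (Λ n) + volume (E n) := measure_union_le _ _
      calc ((L ∩ Λ n).ncard : ℝ) * v'
          = ((hfin.toFinset.card : ℝ≥0∞) * volume (ball (0:Fin N → ℝ) (r/2))).toReal := by
            rw [ENNReal.toReal_mul, hcard]; simp [hv'def]
        _ ≤ (volume (Λ n) + volume (E n)).toReal :=
            ENNReal.toReal_mono (by
              exact ENNReal.add_ne_top.mpr ⟨hVnt n, hEnt n⟩) (hpack.trans hle)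
        _ = (volume (Λ n)).toReal + (volume (E n)).toReal :=
            ENNReal.toReal_add (hVnt n) (hEnt n)
    · intro x hx y hy
      have hxm : x ∈ L ∩ Λ n := hfin.mem_toFinset.mp hx
      have hdxy : dist y x < r/2 := mem_ball.mp hy
      by_cases hyΛ : y ∈ Λ n
      · exact Or.inl hyΛ
      · refine Or.inr (Or.inl (subset_closure ⟨?_, hyΛ⟩))
        refine Set.mem_add.mpr ⟨x, hxm.2, y - x, ?_, by abel⟩
        rw [hKdef, mem_closedBall, dist_eq_norm, sub_zero]
        have h2 : ‖y - x‖ < r/2 := by rwa [dist_eq_norm] at hdxy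
        linarith
  -- ncard splits
  have hsplit : ∀ n, ((S ∩ (Λ n + K₀)).ncard : ℝ) ≤
      ((S ∩ Λ n).ncard : ℝ) + ((𝓛₁ ∩ ((Λ n + K₀) \ Λ n)).ncard : ℝ)
        + ((𝓛₂ ∩ ((Λ n + K₀) \ Λ n)).ncard : ℝ) := by
    intro n
    have hΛsub : Λ n ⊆ Λ n + K₀ := by
      intro x hx
      refine Set.mem_add.mpr ⟨x, hx, 0, ?_, add_zero x⟩
      simpa [hK₀def] using hR.le
    have heq : S ∩ (Λ n + K₀) = (S ∩ Λ n) ∪ (S ∩ ((Λ n + K₀) \ Λ n)) := by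
      rw [← Set.inter_union_distrib_left, Set.union_diff_cancel hΛsub]
    have h1 : (S ∩ (Λ n + K₀)).ncard ≤ (S ∩ Λ n).ncard + (S ∩ ((Λ n + K₀) \ Λ n)).ncard := by
      rw [heq]; exact Set.ncard_union_le _ _
    have hDb : Bornology.IsBounded ((Λ n + K₀) \ Λ n) :=
      (hΛK₀c n).isBounded.subset Set.diff_subset
    have h2 : (S ∩ ((Λ n + K₀) \ Λ n)).ncard ≤
        (𝓛₁ ∩ ((Λ n + K₀) \ Λ n)).ncard + (𝓛₂ ∩ ((Λ n + K₀) \ Λ n)).ncard := by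
      refine le_trans (Set.ncard_le_ncard ?_ ((hfin1 _ hDb).union (hfin2 _ hDb)))
        (Set.ncard_union_le _ _)
      rintro x ⟨hxS, hxD⟩
      rcases hSsub hxS with h | h
      · exact Or.inl ⟨h, hxD⟩
      · exact Or.inr ⟨h, hxD⟩
    have h1' : ((S ∩ (Λ n + K₀)).ncard : ℝ) ≤
        ((S ∩ Λ n).ncard : ℝ) + ((S ∩ ((Λ n + K₀) \ Λ n)).ncard : ℝ) := by exact_mod_cast h1
    have h2' : ((S ∩ ((Λ n + K₀) \ Λ n)).ncard : ℝ) ≤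
        ((𝓛₁ ∩ ((Λ n + K₀) \ Λ n)).ncard : ℝ) + ((𝓛₂ ∩ ((Λ n + K₀) \ Λ n)).ncard : ℝ) := by
      exact_mod_cast h2
    linarith
  have hup0 : ∀ n, ((S ∩ Λ n).ncard : ℝ) ≤ ((𝓛₁ ∩ Λ n).ncard : ℝ) + ((𝓛₂ ∩ Λ n).ncard : ℝ) := by
    intro n
    have h2 : (S ∩ Λ n).ncard ≤ (𝓛₁ ∩ Λ n).ncard + (𝓛₂ ∩ Λ n).ncard := by
      refine le_trans (Set.ncard_le_ncard ?_ ((hfin1 _ (hΛb n)).union (hfin2 _ (hΛb n))))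
        (Set.ncard_union_le _ _)
      rintro x ⟨hxS, hxD⟩
      rcases hSsub hxS with h | h
      · exact Or.inl ⟨h, hxD⟩
      · exact Or.inr ⟨h, hxD⟩
    exact_mod_cast h2
  -- the van Hove limit
  have hδpos : 0 < min 1 (v' / (4 * vR')) := lt_min one_pos (by positivity)
  have hεev : ∀ᶠ n in atTop,
      (volume (E n)).toReal / (volume (Λ n)).toReal < min 1 (v' / (4 * vR')) := by
    exact (hvH K hKc).eventually_lt_const hδpos
  -- eventual lower and upper bounds for the density of S
  have hlow : ∀ᶠ n in atTop,
      1 / (2 * vR') ≤ ((S ∩ Λ n).ncard : ℝ) / (volume (Λ n)).toReal := by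
    filter_upwards [hεev] with n hεn
    set Vn := (volume (Λ n)).toReal
    set en := (volume (E n)).toReal
    have hVp : 0 < Vn := hVnpos n
    have h1 : Vn ≤ ((S ∩ (Λ n + K₀)).ncard : ℝ) * vR' := key1 n
    have h2 : ((𝓛₁ ∩ ((Λ n + K₀) \ Λ n)).ncard : ℝ) * v' ≤ en := key2 𝓛₁ hUD₁' n
    have h3 : ((𝓛₂ ∩ ((Λ n + K₀) \ Λ n)).ncard : ℝ) * v' ≤ en := key2 𝓛₂ hUD₂' n
    have h4 := hsplit n
    have hεn' : en / Vn < v' / (4 * vR') := hεn.trans_le (min_le_right _ _)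
    have hen : en < v' / (4 * vR') * Vn := (div_lt_iff₀ hVp).mp hεn'
    -- count lower bound
    have hb1 : ((𝓛₁ ∩ ((Λ n + K₀) \ Λ n)).ncard : ℝ) ≤ en / v' := (le_div_iff₀ hv'pos).mpr h2
    have hb2 : ((𝓛₂ ∩ ((Λ n + K₀) \ Λ n)).ncard : ℝ) ≤ en / v' := (le_div_iff₀ hv'pos).mpr h3
    have ht : Vn / vR' ≤ ((S ∩ (Λ n + K₀)).ncard : ℝ) := (div_le_iff₀ hvR'pos).mpr h1
    have hev : en / v' < Vn / (4 * vR') := by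
      rw [div_lt_div_iff₀ hv'pos (by positivity)]
      calc en * (4 * vR') < (v' / (4 * vR') * Vn) * (4 * vR') := by
            apply mul_lt_mul_of_pos_right hen; positivity
        _ = Vn * v' := by field_simp
    have ha : Vn / (2 * vR') ≤ ((S ∩ Λ n).ncard : ℝ) := by
      have : Vn / vR' - 2 * (Vn / (4 * vR')) = Vn / (2 * vR') := by ring
      linarith
    rw [le_div_iff₀ hVp]
    calc 1 / (2 * vR') * Vn = Vn / (2 * vR') := by ring
      _ ≤ _ := ha
  have hup : ∀ᶠ n in atTop,
      ((S ∩ Λ n).ncard : ℝ) / (volume (Λ n)).toReal ≤ 4 / v' := by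
    filter_upwards [hεev] with n hεn
    set Vn := (volume (Λ n)).toReal
    set en := (volume (E n)).toReal
    have hVp : 0 < Vn := hVnpos n
    have h1 : ((𝓛₁ ∩ Λ n).ncard : ℝ) * v' ≤ Vn + en := key3 𝓛₁ hUD₁' n
    have h2 : ((𝓛₂ ∩ Λ n).ncard : ℝ) * v' ≤ Vn + en := key3 𝓛₂ hUD₂' n
    have h3 := hup0 n
    have hεn' : en / Vn < 1 := hεn.trans_le (min_le_left _ _)
    have hen : en < Vn := by
      have := (div_lt_one hVp).mp hεn'
      linarith
    have ha : ((S ∩ Λ n).ncard : ℝ) * v' ≤ 4 * Vn := by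
      have hc1 : ((𝓛₁ ∩ Λ n).ncard : ℝ) * v' + ((𝓛₂ ∩ Λ n).ncard : ℝ) * v' ≤ 2 * (Vn + en) := by
        linarith
      nlinarith [hv'pos]
    rw [div_le_div_iff₀ hVp hv'pos]
    linarith
  -- contradiction with the vanishing limsup
  have hbdd : IsBoundedUnder (· ≤ ·) atTop
      (fun n => ((S ∩ Λ n).ncard : ℝ) / (volume (Λ n)).toReal) :=
    isBoundedUnder_of_eventually_le hup
  have hles := le_limsup_of_frequently_le hlow.frequently hbdd
  rw [hSC] at hles
  have : 0 < 1 / (2 * vR') := by positivity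
  linarith
end main
end

section
/- Let 𝓛 be a Meyer set in G with hull Ω. If 𝓛₁, 𝓛₂ ∈ Ω are strongly regionally proximal, then 𝓛₁ − 𝓛₂ ⊂ (𝓛 − 𝓛) − (𝓛 − 𝓛). -/
open Pointwise

/-- Let 𝓛 be a Meyer set in ℝ^N with hull Ω.  If 𝓛₁, 𝓛₂ ∈ Ω are
strongly regionally proximal, then 𝓛₁ − 𝓛₂ ⊂ (𝓛 − 𝓛) − (𝓛 − 𝓛). -/
theorem strongly_regionally_proximal_difference_subset
    {N : ℕ} (𝓛 : Set (Fin N → ℝ)) (Ω : Set (Set (Fin N → ℝ)))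
    -- every element of the hull has its difference set inside 𝓛 − 𝓛:
    (hΩdiff : ∀ 𝓛' ∈ Ω, 𝓛' - 𝓛' ⊆ 𝓛 - 𝓛)
    -- uniform relative denseness of the elements of the hull:
    (hΩrd : ∃ R₀ > (0:ℝ), ∀ 𝓛' ∈ Ω, ∀ v : Fin N → ℝ, ∃ y ∈ 𝓛', dist v y ≤ R₀)
    (𝓛₁ 𝓛₂ : Set (Fin N → ℝ)) (h₁ : 𝓛₁ ∈ Ω) (h₂ : 𝓛₂ ∈ Ω)
    -- strong regional proximality of 𝓛₁ and 𝓛₂: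
    (hsrp : ∀ R > (0:ℝ), ∃ 𝓛₁' ∈ Ω, ∃ 𝓛₂' ∈ Ω, ∃ t : Fin N → ℝ,
      𝓛₁ ∩ Metric.closedBall 0 R = 𝓛₁' ∩ Metric.closedBall 0 R ∧
      𝓛₂ ∩ Metric.closedBall 0 R = 𝓛₂' ∩ Metric.closedBall 0 R ∧
      ((fun x => x - t) '' 𝓛₁') ∩ Metric.closedBall 0 R =
        ((fun x => x - t) '' 𝓛₂') ∩ Metric.closedBall 0 R) :
    𝓛₁ - 𝓛₂ ⊆ (𝓛 - 𝓛) - (𝓛 - 𝓛) := by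
  intro a ha
  rw [Set.mem_sub] at ha
  obtain ⟨x, hx, y, hy, hxy⟩ := ha
  obtain ⟨R₀, hR₀, hrd⟩ := hΩrd
  set R : ℝ := max (max ‖x‖ ‖y‖) R₀ + 1 with hR
  have hRpos : R > 0 := by
    have := le_max_right (max ‖x‖ ‖y‖) R₀
    linarith
  obtain ⟨𝓛₁', h₁', 𝓛₂', h₂', t, e₁, e₂, e₃⟩ := hsrp R hRpos
  have hxball : x ∈ Metric.closedBall (0 : Fin N → ℝ) R := by
    simp only [Metric.mem_closedBall, dist_zero_right]
    have h1 := le_max_left ‖x‖ ‖y‖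
    have h2 := le_max_left (max ‖x‖ ‖y‖) R₀
    linarith
  have hyball : y ∈ Metric.closedBall (0 : Fin N → ℝ) R := by
    simp only [Metric.mem_closedBall, dist_zero_right]
    have h1 := le_max_right ‖x‖ ‖y‖
    have h2 := le_max_left (max ‖x‖ ‖y‖) R₀
    linarith
  have hx' : x ∈ 𝓛₁' := (e₁ ▸ Set.mem_inter hx hxball).1
  have hy' : y ∈ 𝓛₂' := (e₂ ▸ Set.mem_inter hy hyball).1
  -- find a common point of 𝓛₁' and 𝓛₂'
  obtain ⟨z, hz, hzd⟩ := hrd 𝓛₁' h₁' t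
  have hztball : z - t ∈ Metric.closedBall (0 : Fin N → ℝ) R := by
    simp only [Metric.mem_closedBall, dist_zero_right]
    have : ‖z - t‖ = dist z t := (dist_eq_norm z t).symm
    rw [this, dist_comm]
    have h2 := le_max_right (max ‖x‖ ‖y‖) R₀
    linarith
  have hmem : z - t ∈ ((fun x => x - t) '' 𝓛₂') ∩ Metric.closedBall 0 R := by
    rw [← e₃]
    exact Set.mem_inter ⟨z, hz, rfl⟩ hztball
  obtain ⟨⟨w, hw, hwz⟩, -⟩ := hmem
  have hwz' : w = z := by
    have := sub_left_injective hwz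
    exact this
  subst hwz'
  have hxz : x - w ∈ 𝓛 - 𝓛 := hΩdiff 𝓛₁' h₁' (Set.sub_mem_sub hx' hz)
  have hyz : y - w ∈ 𝓛 - 𝓛 := hΩdiff 𝓛₂' h₂' (Set.sub_mem_sub hy' hw)
  have : a = (x - w) - (y - w) := by rw [← hxy]; ring
  rw [this]
  exact Set.sub_mem_sub hxz hyz
end

section
/- Let M be a minimal left ideal of the Ellis semigroup E of a dynamical system and J its set of idempotents, fix p₀ ∈ J and let 𝒢 = p₀M. Then the map M → 𝒢 × J, pm ↦ (p₀m, p), is a semigroup isomorphism, where 𝒢 × J carries the product (g,p)(g',p') = (gg', pp') and idempotents multiply by left domination pq = p. -/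
/-- Let M be a minimal left ideal of the Ellis semigroup E, J its set
of idempotents, p₀ ∈ J and 𝒢 = p₀M.  Then M ≅ 𝒢 × J as semigroups via pm ↦ (p₀m, p),
where 𝒢 × J carries the componentwise product and idempotents multiply by left
domination pq = p.  We express the isomorphism by: every m ∈ M decomposes uniquely
as m = p·g with p ∈ J, g ∈ 𝒢 (namely g = p₀·m), 𝒢 is multiplicatively closed, and
the product is componentwise: (p·g)·(p'·g') = (p·p')·(g·g'). -/
theorem minimal_ideal_iso_group_times_idempotents
    {E : Type} [Semigroup E] (M : Set E)
    (hMne : M.Nonempty)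
    (hIdeal : ∀ e : E, ∀ m ∈ M, e * m ∈ M)
    -- J is the set of idempotents of M:
    (J : Set E) (hJ : J = {p ∈ M | p * p = p})
    (p₀ : E) (hp₀ : p₀ ∈ J)
    -- known facts about minimal left ideals:
    (hmp : ∀ m ∈ M, ∀ p ∈ J, m * p = m)
    (hJprod : ∀ p ∈ J, ∀ q ∈ J, p * q = p)
    (hunion : ∀ m ∈ M, ∃ p ∈ J, p * m = m)
    (hdisj : ∀ p ∈ J, ∀ q ∈ J, ∀ m ∈ M, p * m = m → q * m = m → p = q)
    (hgroup : ∀ p ∈ J, ∀ m ∈ M, ∃ n ∈ M, (p * n) * (p * m) = p ∧ (p * m) * (p * n) = p)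
    -- 𝒢 = p₀ M:
    (𝒢 : Set E) (h𝒢 : 𝒢 = (fun m => p₀ * m) '' M) :
    -- unique decomposition m = p · g with p ∈ J, g ∈ 𝒢:
    (∀ m ∈ M, ∃! q : E × E, q.1 ∈ J ∧ q.2 ∈ 𝒢 ∧ q.1 * q.2 = m) ∧
    -- the decomposition of m ∈ pM is (p, p₀·m):
    (∀ p ∈ J, ∀ m ∈ M, p * m = m → p * (p₀ * m) = m) ∧
    -- 𝒢 is closed under the product (it is the group p₀M with neutral element p₀):
    (∀ g ∈ 𝒢, ∀ g' ∈ 𝒢, g * g' ∈ 𝒢) ∧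
    -- the product on M is componentwise with respect to the decomposition,
    -- J multiplying by left domination:
    (∀ p ∈ J, ∀ p' ∈ J, ∀ g ∈ 𝒢, ∀ g' ∈ 𝒢,
      (p * g) * (p' * g') = (p * p') * (g * g') ∧ p * p' = p) := by

  -- basic facts
  have hJM : ∀ p ∈ J, p ∈ M := by intro p hp; rw [hJ] at hp; exact hp.1
  have hpp : ∀ p ∈ J, p * p = p := by intro p hp; rw [hJ] at hp; exact hp.2
  have h𝒢M : ∀ g ∈ 𝒢, g ∈ M := by
    intro g hg; rw [h𝒢] at hg; obtain ⟨m, hm, rfl⟩ := hg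
    exact hIdeal p₀ m hm
  have hp₀g : ∀ g ∈ 𝒢, p₀ * g = g := by
    intro g hg; rw [h𝒢] at hg; obtain ⟨m, hm, rfl⟩ := hg
    rw [← mul_assoc, hpp p₀ hp₀]
  have part2 : ∀ p ∈ J, ∀ m ∈ M, p * m = m → p * (p₀ * m) = m := by
    intro p hp m hm hpm
    rw [← mul_assoc, hJprod p hp p₀ hp₀, hpm]
  refine ⟨?_, part2, ?_, ?_⟩
  · intro m hm
    obtain ⟨p, hp, hpm⟩ := hunion m hm
    refine ⟨(p, p₀ * m), ⟨hp, ?_, part2 p hp m hm hpm⟩, ?_⟩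
    · rw [h𝒢]; exact ⟨m, hm, rfl⟩
    · rintro ⟨p', g'⟩ ⟨hp', hg', heq⟩
      simp only at heq ⊢
      have hg'M := h𝒢M g' hg'
      have hp'm : p' * m = m := by
        rw [← heq, ← mul_assoc, hpp p' hp']
      have hpeq : p' = p := hdisj p' hp' p hp m hm hp'm hpm
      have : p₀ * m = g' := by
        rw [← heq, ← mul_assoc, hJprod p₀ hp₀ p' hp', hp₀g g' hg']
      rw [hpeq, this]
  · intro g hg g' hg'
    rw [h𝒢]
    refine ⟨g * g', hIdeal g g' (h𝒢M g' hg'), ?_⟩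
    simp only [← mul_assoc, hp₀g g hg]
  · intro p hp p' hp' g hg g' hg'
    refine ⟨?_, hJprod p hp p' hp'⟩
    have hgp' : g * p' = g := hmp g (h𝒢M g hg) p' hp'
    rw [hJprod p hp p' hp', mul_assoc, ← mul_assoc g, hgp']
end
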